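/- There exists a closed 5-prince's tour on the 6×6 chessboard; that is, the graph whose vertices are the cells of the 6×6 board, with two cells (i,j) and (u,v) adjacent if and only if |i-u|+|j-v| = 5, has a Hamiltonian cycle. -/

import Mathlib

/-- The `k`-prince graph on an `m × n` board: cells `(i,j)` and `(u,v)` are adjacent
iff `|i - u| + |j - v| = k`. -/
def princeGraph (m n k : ℕ) : SimpleGraph (Fin m × Fin n) where
  Adj p q := p ≠ q ∧ |(p.1 : ℤ) - (q.1 : ℤ)| + |(p.2 : ℤ) - (q.2 : ℤ)| = k
  symm := by
    constructor
    rintro p q ⟨hne, h⟩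
    refine ⟨hne.symm, ?_⟩
    rw [abs_sub_comm ((q.1 : ℤ)), abs_sub_comm ((q.2 : ℤ))]
    exact h
  loopless := ⟨fun p h => h.1 rfl⟩

namespace SimpleGraph

variable {V : Type*} {G : SimpleGraph V}

theorem exists_isHamiltonianCycle_of_isChain [DecidableEq V] {u : V} {l : List V}
    (hchain : (u :: (l ++ [u])).IsChain G.Adj) (hnodup : (u :: l).Nodup)
    (hmem : ∀ v, v ∈ u :: l) (hlen : 3 ≤ (u :: l).length) :
    ∃ p : G.Walk u u, p.IsHamiltonianCycle := by
  obtain ⟨p, hp⟩ : ∃ p : G.Walk u u, p.support = u :: (l ++ [u]) :=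
    ⟨(Walk.ofSupport _ (List.cons_ne_nil _ _) hchain).copy (by simp) (by simp),
      (Walk.support_copy _ _ _).trans (Walk.support_ofSupport _ _)⟩
  have hlength : p.length = (u :: l).length := by
    have := p.length_support
    simp_all
  have hnil : ¬ p.Nil := by
    rw [Walk.not_nil_iff_lt_length, hlength]
    simp
  have hsupport : p.tail.support = l ++ [u] := by
    rw [Walk.support_tail_of_not_nil _ hnil, hp, List.tail_cons]
  have hperm : (l ++ [u]).Perm (u :: l) := List.perm_append_singleton u l
  refine ⟨p, Walk.isHamiltonianCycle_isCycle_and_isHamiltonian_tail.mpr ⟨?_, fun v => ?_⟩⟩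
  · refine Walk.isCycle_iff_isPath_tail_and_le_length.mpr ⟨?_, hlength ▸ hlen⟩
    rw [Walk.isPath_def, hsupport]
    exact hperm.nodup_iff.mpr hnodup
  · rw [hsupport, hperm.count_eq]
    exact List.count_eq_one_of_mem hnodup (hmem v)

end SimpleGraph

instance (m n k : ℕ) : DecidableRel (princeGraph m n k).Adj := fun p q =>
  inferInstanceAs (Decidable (p ≠ q ∧ |(p.1 : ℤ) - (q.1 : ℤ)| + |(p.2 : ℤ) - (q.2 : ℤ)| = k))

-- Cells as 0-indexed (row, column), in the order visited after `(0, 0)`.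
def prince5Tour6x6 : List (Fin 6 × Fin 6) :=
  [(2,3), (4,0), (1,2), (5,1), (3,4), (0,2), (4,1), (1,3), (4,5), (2,2), (5,4), (3,1),
   (1,4), (5,5), (3,2), (0,4), (4,3), (1,5), (0,1), (2,4), (1,0), (3,3), (0,5), (1,1),
   (5,2), (2,0), (2,5), (4,2), (0,3), (3,5), (2,1), (5,3), (3,0), (4,4), (5,0)]

/-- There exists a closed 5-prince's tour on the 6×6 chessboard. -/
theorem prince5_tour_6x6 :
    ∃ (v : Fin 6 × Fin 6) (p : (princeGraph 6 6 5).Walk v v), p.IsHamiltonianCycle :=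
  ⟨(0, 0), SimpleGraph.exists_isHamiltonianCycle_of_isChain (G := princeGraph 6 6 5)
    (u := (0, 0)) (l := prince5Tour6x6)
    (by decide) (by decide) (by decide) (by decide)⟩
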